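/- arXiv:2604.16616 — 2 statements merged into one kernel-verified Lean document; each statement's English description precedes it below -/
import Mathlib

section
/- Let ρ be a density matrix (PSD, trace one) on a finite-dimensional Hilbert space, P an orthogonal projection and Q = I − P. Then ‖PρQ‖₂² ≤ ‖PρP‖_op · Tr(QρQ), where ‖·‖₂ is the Hilbert–Schmidt norm and ‖·‖_op the operator norm. -/
open Matrix
open scoped ComplexOrder

attribute [local instance] Matrix.instL2OpNormedAddCommGroup

/-!
Factor `ρ = Sᴴ S`. Then `PρQ = (P Sᴴ)(S Q)`, and the squared Hilbert–Schmidt norm of a product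
`A C` is `∑ⱼ ‖A cⱼ‖²` over the columns `cⱼ` of `C`, hence at most `‖A‖² ‖C‖₂²`. With `A = P Sᴴ`,
`C = S Q` this is the claim, since `‖P Sᴴ‖² = ‖P ρ P‖` (C⋆-identity) and `‖S Q‖₂² = Tr(QρQ)`.
-/

namespace Matrix

variable {𝕜 l m n k : Type*} [RCLike 𝕜] [Fintype l] [Fintype m] [Fintype n] [Fintype k]

lemma re_trace_conjTranspose_mul_self_eq_sum_norm_sq_col (C : Matrix m k 𝕜) :
    RCLike.re (Cᴴ * C).trace = ∑ j, ‖(EuclideanSpace.equiv m 𝕜).symm (Cᵀ j)‖ ^ 2 := by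
  simp only [trace, diag, mul_apply, conjTranspose_apply, map_sum, EuclideanSpace.norm_sq_eq]
  refine Finset.sum_congr rfl fun j _ => Finset.sum_congr rfl fun i _ => ?_
  rw [RCLike.star_def, RCLike.conj_mul, ← RCLike.ofReal_pow, RCLike.ofReal_re]
  rfl

lemma re_trace_conjTranspose_mul_self_mul_le [DecidableEq m]
    (A : Matrix l m 𝕜) (C : Matrix m k 𝕜) :
    RCLike.re ((A * C)ᴴ * (A * C)).trace ≤ ‖A‖ ^ 2 * RCLike.re (Cᴴ * C).trace := by
  have hcol : ∀ j, (A * C)ᵀ j = A *ᵥ Cᵀ j := fun j => by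
    ext i; simp [mul_apply, mulVec, dotProduct]
  simp only [re_trace_conjTranspose_mul_self_eq_sum_norm_sq_col, hcol, Finset.mul_sum]
  refine Finset.sum_le_sum fun j _ => ?_
  rw [← mul_pow]
  exact pow_le_pow_left₀ (norm_nonneg _) (A.l2_opNorm_mulVec _) 2

theorem PosSemidef.re_trace_conjTranspose_mul_self_le [DecidableEq m] [DecidableEq n]
    {ρ : Matrix n n 𝕜} (hρ : ρ.PosSemidef) (X : Matrix m n 𝕜) (Y : Matrix n k 𝕜) :
    RCLike.re ((X * ρ * Y)ᴴ * (X * ρ * Y)).trace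
      ≤ ‖X * ρ * Xᴴ‖ * RCLike.re (Yᴴ * ρ * Y).trace := by
  obtain ⟨S, rfl⟩ : ∃ S : Matrix n n 𝕜, ρ = Sᴴ * S := by
    open scoped MatrixOrder in
    exact CStarAlgebra.nonneg_iff_eq_star_mul_self.mp hρ.nonneg
  have hnorm : ‖X * (Sᴴ * S) * Xᴴ‖ = ‖X * Sᴴ‖ ^ 2 := by
    have h := l2_opNorm_conjTranspose_mul_self (X * Sᴴ)ᴴ
    rw [conjTranspose_conjTranspose, l2_opNorm_conjTranspose] at h
    rw [sq, ← h, conjTranspose_mul, conjTranspose_conjTranspose]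
    simp only [Matrix.mul_assoc]
  have hXY : X * (Sᴴ * S) * Y = (X * Sᴴ) * (S * Y) := by simp only [Matrix.mul_assoc]
  have hYY : Yᴴ * (Sᴴ * S) * Y = (S * Y)ᴴ * (S * Y) := by
    simp only [conjTranspose_mul, Matrix.mul_assoc]
  rw [hnorm, hXY, hYY]
  exact re_trace_conjTranspose_mul_self_mul_le _ _

end Matrix

theorem schur_coherence_bound_general {n : Type*} [Fintype n] [DecidableEq n]
    (ρ P : Matrix n n ℂ) (hρ : ρ.PosSemidef)
    (hP : P.IsHermitian) :
    let Q : Matrix n n ℂ := 1 - P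
    let B : Matrix n n ℂ := P * ρ * Q
    ((Bᴴ * B).trace).re ≤ ‖P * ρ * P‖ * ((Q * ρ * Q).trace).re := by
  intro Q B
  have hQ : Qᴴ = Q := by simp only [Q, conjTranspose_sub, conjTranspose_one, hP.eq]
  simpa only [hP.eq, hQ, RCLike.re_to_complex] using hρ.re_trace_conjTranspose_mul_self_le P Q

/-- Schur-complement trace bound: for a density matrix ρ and projection P with
Q = 1 − P, one has ‖PρQ‖₂² ≤ ‖PρP‖_op · Tr(QρQ), where ‖B‖₂² = Tr(BᴴB) is the
squared Hilbert–Schmidt norm and ‖·‖ the L²-operator norm. -/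
theorem schur_coherence_bound {n : Type*} [Fintype n] [DecidableEq n]
    (ρ P : Matrix n n ℂ) (hρ : ρ.PosSemidef) (htr : ρ.trace = 1)
    (hP : P.IsHermitian) (hP2 : P * P = P) :
    let Q : Matrix n n ℂ := 1 - P
    let B : Matrix n n ℂ := P * ρ * Q
    ((Bᴴ * B).trace).re ≤ ‖P * ρ * P‖ * ((Q * ρ * Q).trace).re :=
  schur_coherence_bound_general ρ P hρ hP
end

section
/- Let C > 0, K > 0, α > 0. Suppose x : [0,∞) → (0, C/√e) satisfies x(t)² · log(C/x(t)) ≤ K e^{−2αt} for all t ≥ 0. Then x(t) ≤ √(2K) e^{−αt} for all t, and there exists t₀ ≥ 0 such that for all t ≥ t₀, x(t) ≤ e^{−αt} √(2K/(αt)). -/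
/-- Inversion of the entropy modulus under exponential decay: if
x(t)² log(C/x(t)) ≤ K e^{−2αt} with x(t) ∈ (0, C/√e), then x(t) ≤ √(2K) e^{−αt},
and eventually x(t) ≤ e^{−αt} √(2K/(αt)). -/
theorem modulus_inversion (C K α : ℝ) (hC : 0 < C) (hK : 0 < K) (hα : 0 < α)
    (x : ℝ → ℝ)
    (hx : ∀ t ≥ 0, x t ∈ Set.Ioo (0 : ℝ) (C / Real.sqrt (Real.exp 1)))
    (hbound : ∀ t ≥ 0, (x t) ^ 2 * Real.log (C / x t) ≤ K * Real.exp (-2 * α * t)) :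
    (∀ t ≥ 0, x t ≤ Real.sqrt (2 * K) * Real.exp (-α * t)) ∧
    ∃ t₀ ≥ 0, ∀ t ≥ t₀,
      x t ≤ Real.exp (-α * t) * Real.sqrt (2 * K / (α * t)) := by
  -- crude bound
  have crude : ∀ t ≥ 0, x t ≤ Real.sqrt (2 * K) * Real.exp (-α * t) := by
    intro t ht
    obtain ⟨hxp, hxu⟩ := hx t ht
    have hlog : (1:ℝ)/2 ≤ Real.log (C / x t) := by
      have hse : (0:ℝ) < Real.sqrt (Real.exp 1) := Real.sqrt_pos.2 (Real.exp_pos 1)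
      have h1 : Real.sqrt (Real.exp 1) < C / x t := by
        rw [lt_div_iff₀ hxp]
        calc Real.sqrt (Real.exp 1) * x t < Real.sqrt (Real.exp 1) * (C / Real.sqrt (Real.exp 1)) := by
              exact mul_lt_mul_of_pos_left hxu hse
          _ = C := by field_simp
      have := Real.log_le_log hse h1.le
      rw [Real.log_sqrt (Real.exp_pos 1).le, Real.log_exp] at this
      linarith
    have hb := hbound t ht
    have hsq : (x t) ^ 2 ≤ 2 * K * Real.exp (-2 * α * t) := by
      nlinarith [sq_nonneg (x t)]
    have he : Real.exp (-2 * α * t) = Real.exp (-α * t) * Real.exp (-α * t) := by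
      rw [← Real.exp_add]; ring_nf
    have hy : 0 ≤ Real.sqrt (2 * K) * Real.exp (-α * t) := by positivity
    have hy2 : (Real.sqrt (2 * K) * Real.exp (-α * t)) ^ 2 = 2 * K * Real.exp (-2 * α * t) := by
      rw [mul_pow, Real.sq_sqrt (by positivity), he]; ring
    nlinarith [hxp.le]
  refine ⟨crude, ?_⟩
  set t₀ : ℝ := max (1 / α) (2 * (Real.log (Real.sqrt (2 * K)) - Real.log C) / α) with ht₀def
  have ht₀pos : 0 < t₀ := lt_of_lt_of_le (by positivity) (le_max_left _ _)
  refine ⟨t₀, ht₀pos.le, ?_⟩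
  intro t ht
  have htpos : 0 < t := lt_of_lt_of_le ht₀pos ht
  obtain ⟨hxp, hxu⟩ := hx t htpos.le
  have hb := hbound t htpos.le
  have hcr := crude t htpos.le
  -- log (C / x t) ≥ α t / 2
  have hlogx : Real.log (x t) ≤ Real.log (Real.sqrt (2 * K)) - α * t := by
    have := Real.log_le_log hxp hcr
    rwa [Real.log_mul (by positivity) (Real.exp_ne_zero _), Real.log_exp, neg_mul, ← sub_eq_add_neg] at this
  have hmax : 2 * (Real.log (Real.sqrt (2 * K)) - Real.log C) / α ≤ t :=
    le_trans (le_max_right _ _) ht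
  have hkey : α * t / 2 ≤ Real.log (C / x t) := by
    rw [Real.log_div hC.ne' hxp.ne']
    have : 2 * (Real.log (Real.sqrt (2 * K)) - Real.log C) ≤ α * t := by
      rw [div_le_iff₀ hα] at hmax; linarith [hmax]
    linarith
  have hαt : 0 < α * t := by positivity
  have hαt1 : 1 ≤ α * t := by
    have : 1 / α ≤ t := le_trans (le_max_left _ _) ht
    rw [div_le_iff₀ hα] at this; linarith
  have hsq : (x t) ^ 2 ≤ 2 * K / (α * t) * Real.exp (-2 * α * t) := by
    have h1 : (x t) ^ 2 * (α * t / 2) ≤ K * Real.exp (-2 * α * t) := by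
      calc (x t) ^ 2 * (α * t / 2) ≤ (x t) ^ 2 * Real.log (C / x t) :=
            mul_le_mul_of_nonneg_left hkey (sq_nonneg _)
        _ ≤ K * Real.exp (-2 * α * t) := hb
    rw [div_mul_eq_mul_div, le_div_iff₀ hαt]
    nlinarith
  have he : Real.exp (-2 * α * t) = Real.exp (-α * t) * Real.exp (-α * t) := by
    rw [← Real.exp_add]; ring_nf
  have hy : 0 ≤ Real.exp (-α * t) * Real.sqrt (2 * K / (α * t)) := by positivity
  have hy2 : (Real.exp (-α * t) * Real.sqrt (2 * K / (α * t))) ^ 2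
      = 2 * K / (α * t) * Real.exp (-2 * α * t) := by
    rw [mul_pow, Real.sq_sqrt (by positivity), he]; ring
  nlinarith [hxp.le]
end
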